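/- arXiv:1412.0612 — 2 statements merged into one kernel-verified Lean document; each statement's English description precedes it below -/
import Mathlib

section
/- Let R = ℂ[z₀,z₁,z₂]/(z₀² − z₁z₂) and let B̄ : R² → R² be the R-linear map given by the matrix [[z₀, −z₁],[−z₂, z₀]] (entries reduced mod f). Then the kernel of the R-linear map p : R² → R, p(u,v) = z₀u + z₁v, is exactly the image of B̄. In other words, the syzygies of the row (z₀ z₁) over R are generated by the columns of B̄, giving the start of the 2-periodic free resolution of the skyscraper module R/(z₀,z₁). -/
/-!
STATEMENT 1: Let R = ℂ[z₀,z₁,z₂]/(z₀² − z₁z₂) and B̄ : R² → R² the map given by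
[[z₀,−z₁],[−z₂,z₀]] (mod f).  Then the kernel of p : R² → R, p(u,v) = z₀u + z₁v,
equals the image of B̄: the syzygies of the row (z₀ z₁) over R are generated by
the columns of B̄.
-/

set_option synthInstance.maxHeartbeats 1000000

noncomputable section
open MvPolynomial

/-- The polynomial ring S = ℂ[z₀,z₁,z₂]. -/
abbrev S3 : Type := MvPolynomial (Fin 3) ℂ

/-- The conic polynomial f = z₀² − z₁z₂. -/
def fConic : S3 := X 0 ^ 2 - X 1 * X 2

/-- R = ℂ[z₀,z₁,z₂]/(z₀² − z₁z₂). -/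
abbrev Rconic : Type := S3 ⧸ Ideal.span {fConic}

/-- The quotient map S → R. -/
def q : S3 →+* Rconic := Ideal.Quotient.mk _

/-- B̄ : the matrix [[z₀, −z₁],[−z₂, z₀]] with entries reduced mod f. -/
def Bbar : Matrix (Fin 2) (Fin 2) Rconic := !![q (X 0), -q (X 1); -q (X 2), q (X 0)]

/-- The R-linear map p : R² → R, p(u,v) = z₀·u + z₁·v. -/
def pmap : (Fin 2 → Rconic) →ₗ[Rconic] Rconic :=
  q (X 0) • LinearMap.proj 0 + q (X 1) • LinearMap.proj 1

/-! Write `f = x² − yz`. From `xu + yv = fg` one gets `x(u − xg) = y(−v − zg)`; if `y` is a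
nonzerodivisor modulo `x` then `x ∣ −v − zg`, say `−v − zg = xk`, and cancelling `x` gives
`u = xg + yk`. Thus every syzygy of `(x, y)` modulo `f` is `g·(x, −z) + (−k)·(−y, x)`. For the
conic, `x = z₀` is prime and does not divide `y = z₁`. -/

section Syzygies

variable {S R : Type*} [CommRing S] [CommRing R]

theorem exists_eq_of_mul_add_mul_eq {x y z u v g : S} (hx : IsLeftRegular x)
    (hy : ∀ w, x ∣ y * w → x ∣ w) (h : x * u + y * v = (x ^ 2 - y * z) * g) :
    ∃ k, u = x * g + y * k ∧ v = -(z * g) - x * k := by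
  have hsyz : x * (u - x * g) = y * (-v - z * g) := by linear_combination h
  obtain ⟨k, hk⟩ := hy _ ⟨u - x * g, hsyz.symm⟩
  refine ⟨k, ?_, by linear_combination -hk⟩
  have hcancel : u - x * g = y * k := hx (show x * _ = x * _ by rw [hsyz, hk]; ring)
  linear_combination hcancel

theorem range_le_ker_of_sq_eq_mul {a b c : R} (habc : a ^ 2 = b * c) :
    LinearMap.range !![a, -b; -c, a].mulVecLin ≤
      LinearMap.ker (a • LinearMap.proj 0 + b • LinearMap.proj 1 : (Fin 2 → R) →ₗ[R] R) := by
  rintro _ ⟨w, rfl⟩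
  simp only [LinearMap.mem_ker, LinearMap.add_apply, LinearMap.smul_apply, LinearMap.proj_apply,
    Matrix.mulVecLin_apply, Matrix.mulVec_fin_two, Matrix.of_apply, Matrix.cons_val_zero,
    Matrix.cons_val_one, smul_eq_mul]
  linear_combination w 0 * habc

theorem ker_le_range_of_ker_eq_span {x y z : S} (φ : S →+* R) (hφ : Function.Surjective φ)
    (hker : RingHom.ker φ = Ideal.span {x ^ 2 - y * z}) (hx : IsLeftRegular x)
    (hy : ∀ w, x ∣ y * w → x ∣ w) :
    LinearMap.ker (φ x • LinearMap.proj 0 + φ y • LinearMap.proj 1 : (Fin 2 → R) →ₗ[R] R) ≤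
      LinearMap.range !![φ x, -φ y; -φ z, φ x].mulVecLin := by
  intro w hw
  obtain ⟨u, hu⟩ := hφ (w 0)
  obtain ⟨v, hv⟩ := hφ (w 1)
  have hsyz : x * u + y * v ∈ Ideal.span {x ^ 2 - y * z} := by
    rw [← hker, RingHom.mem_ker]
    simpa [hu, hv] using hw
  obtain ⟨g, hg⟩ := Ideal.mem_span_singleton.mp hsyz
  obtain ⟨k, rfl, rfl⟩ := exists_eq_of_mul_add_mul_eq hx hy hg
  refine ⟨![φ g, -φ k], ?_⟩
  ext i
  fin_cases i <;> simp [← hu, ← hv] <;> ring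

theorem ker_eq_range_of_ker_eq_span {x y z : S} (φ : S →+* R) (hφ : Function.Surjective φ)
    (hker : RingHom.ker φ = Ideal.span {x ^ 2 - y * z}) (hx : IsLeftRegular x)
    (hy : ∀ w, x ∣ y * w → x ∣ w) :
    LinearMap.ker (φ x • LinearMap.proj 0 + φ y • LinearMap.proj 1 : (Fin 2 → R) →ₗ[R] R) =
      LinearMap.range !![φ x, -φ y; -φ z, φ x].mulVecLin := by
  refine le_antisymm (ker_le_range_of_ker_eq_span φ hφ hker hx hy)
    (range_le_ker_of_sq_eq_mul ?_)
  rw [← sub_eq_zero, ← map_pow, ← map_mul, ← map_sub, ← RingHom.mem_ker, hker]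
  exact Ideal.mem_span_singleton_self _

end Syzygies

theorem ker_row_eq_image_of_Bbar :
    LinearMap.ker pmap = LinearMap.range Bbar.mulVecLin := by
  have hX0 : Prime (X 0 : S3) := X_prime
  refine ker_eq_range_of_ker_eq_span q Ideal.Quotient.mk_surjective Ideal.mk_ker
    (IsRegular.of_ne_zero hX0.ne_zero).left fun w hw => ?_
  exact (hX0.dvd_or_dvd hw).resolve_left (by simp)

end
end

section
/- Let R = ℂ[z₀,z₁,z₂]/(z₀² − z₁z₂) and let Ā, B̄ : R² → R² be the R-linear maps given by the matrices A = [[z₀, z₁],[z₂, z₀]] and B = [[z₀, −z₁],[−z₂, z₀]] with entries reduced mod f. Then ker Ā = im B̄ and ker B̄ = im Ā; i.e., the 2-periodic complex ⋯ → R² →B̄ R² →Ā R² →B̄ R² → ⋯ is exact at every position. -/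
/-!
STATEMENT 2: Let R = ℂ[z₀,z₁,z₂]/(z₀² − z₁z₂) and Ā, B̄ : R² → R² the maps
given by A = [[z₀,z₁],[z₂,z₀]] and B = [[z₀,−z₁],[−z₂,z₀]] (mod f).  Then
ker Ā = im B̄ and ker B̄ = im Ā: the 2-periodic complex
⋯ → R² →B̄ R² →Ā R² →B̄ R² → ⋯ is exact at every position.
-/

set_option synthInstance.maxHeartbeats 1000000

noncomputable section
open MvPolynomial

/-- Ā : the matrix [[z₀, z₁],[z₂, z₀]] with entries reduced mod f. -/
def Abar : Matrix (Fin 2) (Fin 2) Rconic := !![q (X 0), q (X 1); q (X 2), q (X 0)]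

lemma fConic_ne_zero : fConic ≠ 0 := by
  intro h
  have := congrArg (eval ![1, 0, 0]) h
  simp [fConic] at this

lemma q_fConic : q fConic = 0 :=
  Ideal.Quotient.eq_zero_iff_mem.mpr (Ideal.subset_span rfl)

lemma q_rel : q (X 0) * q (X 0) - q (X 1) * q (X 2) = 0 := by
  have h : q (X 0 ^ 2 - X 1 * X 2) = 0 := q_fConic
  rw [map_sub, map_mul, map_pow] at h
  linear_combination h

lemma q_zero_iff (p : S3) : q p = 0 ↔ ∃ a : S3, p = fConic * a := by
  rw [show q p = 0 ↔ p ∈ Ideal.span {fConic} from Ideal.Quotient.eq_zero_iff_mem,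
    Ideal.mem_span_singleton]
  exact ⟨fun ⟨c, hc⟩ => ⟨c, hc⟩, fun ⟨c, hc⟩ => ⟨c, hc⟩⟩

lemma hAB : Abar * Bbar = 0 := by
  have h := q_rel
  ext i j
  fin_cases i <;> fin_cases j <;>
    simp [Abar, Bbar, Matrix.mul_apply, Fin.sum_univ_two] <;>
    first
      | linear_combination h
      | linear_combination -h
      | (ring_nf; done)
      | (ring_nf; linear_combination h)
      | (ring_nf; linear_combination -h)

lemma hBA : Bbar * Abar = 0 := by
  have h := q_rel
  ext i j
  fin_cases i <;> fin_cases j <;>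
    simp [Abar, Bbar, Matrix.mul_apply, Fin.sum_univ_two] <;>
    first
      | linear_combination h
      | linear_combination -h
      | (ring_nf; done)
      | (ring_nf; linear_combination h)
      | (ring_nf; linear_combination -h)

theorem two_periodic_complex_exact :
    LinearMap.ker Abar.mulVecLin = LinearMap.range Bbar.mulVecLin ∧
    LinearMap.ker Bbar.mulVecLin = LinearMap.range Abar.mulVecLin := by
  constructor
  · ext v
    simp only [LinearMap.mem_ker, LinearMap.mem_range]
    constructor
    · intro hv
      obtain ⟨p, hp⟩ : ∃ p, q p = v 0 := Ideal.Quotient.mk_surjective (v 0)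
      obtain ⟨r, hr⟩ : ∃ r, q r = v 1 := Ideal.Quotient.mk_surjective (v 1)
      have h0 : q (X 0 * p + X 1 * r) = 0 := by
        have h := congrFun hv 0
        simp [Abar, Matrix.mulVecLin_apply, Matrix.mulVec, dotProduct,
          Fin.sum_univ_two] at h
        rw [map_add, map_mul, map_mul, hp, hr]
        exact h
      have h1 : q (X 2 * p + X 0 * r) = 0 := by
        have h := congrFun hv 1
        simp [Abar, Matrix.mulVecLin_apply, Matrix.mulVec, dotProduct,
          Fin.sum_univ_two] at h
        rw [map_add, map_mul, map_mul, hp, hr]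
        exact h
      obtain ⟨a, ha⟩ := (q_zero_iff _).mp h0
      obtain ⟨b, hb⟩ := (q_zero_iff _).mp h1
      simp only [fConic] at ha hb
      have hpa : p = X 0 * a - X 1 * b :=
        mul_left_cancel₀ fConic_ne_zero (by
          simp only [fConic]; linear_combination X 0 * ha - X 1 * hb)
      have hrb : r = -(X 2 * a) + X 0 * b :=
        mul_left_cancel₀ fConic_ne_zero (by
          simp only [fConic]; linear_combination X 0 * hb - X 2 * ha)
      refine ⟨![q a, q b], ?_⟩
      funext i
      fin_cases i <;>
        simp [Bbar, Matrix.mulVecLin_apply, Matrix.mulVec, dotProduct,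
          Fin.sum_univ_two, Fin.mk_zero, Fin.mk_one, ← hp, ← hr, hpa, hrb,
          map_sub, map_add, map_neg, map_mul] <;>
        first | ring | (ring_nf; done) | ring_nf
    · rintro ⟨u, rfl⟩
      have h : (Abar * Bbar).mulVecLin u = 0 := by rw [hAB]; simp
      rwa [Matrix.mulVecLin_mul, LinearMap.comp_apply] at h
  · ext v
    simp only [LinearMap.mem_ker, LinearMap.mem_range]
    constructor
    · intro hv
      obtain ⟨p, hp⟩ : ∃ p, q p = v 0 := Ideal.Quotient.mk_surjective (v 0)
      obtain ⟨r, hr⟩ : ∃ r, q r = v 1 := Ideal.Quotient.mk_surjective (v 1)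
      have h0 : q (X 0 * p - X 1 * r) = 0 := by
        have h := congrFun hv 0
        simp [Bbar, Matrix.mulVecLin_apply, Matrix.mulVec, dotProduct,
          Fin.sum_univ_two] at h
        rw [map_sub, map_mul, map_mul, hp, hr]
        linear_combination h
      have h1 : q (-(X 2 * p) + X 0 * r) = 0 := by
        have h := congrFun hv 1
        simp [Bbar, Matrix.mulVecLin_apply, Matrix.mulVec, dotProduct,
          Fin.sum_univ_two] at h
        rw [map_add, map_neg, map_mul, map_mul, hp, hr]
        linear_combination h
      obtain ⟨a, ha⟩ := (q_zero_iff _).mp h0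
      obtain ⟨b, hb⟩ := (q_zero_iff _).mp h1
      simp only [fConic] at ha hb
      have hpa : p = X 0 * a + X 1 * b :=
        mul_left_cancel₀ fConic_ne_zero (by
          simp only [fConic]; linear_combination X 0 * ha + X 1 * hb)
      have hrb : r = X 2 * a + X 0 * b :=
        mul_left_cancel₀ fConic_ne_zero (by
          simp only [fConic]; linear_combination X 0 * hb + X 2 * ha)
      refine ⟨![q a, q b], ?_⟩
      funext i
      fin_cases i <;>
        simp [Abar, Matrix.mulVecLin_apply, Matrix.mulVec, dotProduct,
          Fin.sum_univ_two, Fin.mk_zero, Fin.mk_one, ← hp, ← hr, hpa, hrb,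
          map_add, map_mul] <;>
        first | ring | (ring_nf; done) | ring_nf
    · rintro ⟨u, rfl⟩
      have h : (Bbar * Abar).mulVecLin u = 0 := by rw [hBA]; simp
      rwa [Matrix.mulVecLin_mul, LinearMap.comp_apply] at h


end
end
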